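/- Let (Ω, 𝒜, μ) be a probability space, let X, Y₀, Y₁ : Ω → ℝ be random variables with Y₀, Y₁ integrable, and let T₀, T₁ : Ω → ℝ be random variables taking values in {0, 1} (potential treatments). Suppose 1{X ≥ 0} = Z μ-almost surely where Z is the treatment assignment, the observed treatment is T := Z·T₁ + (1 − Z)·T₀, and the observed outcome is Y := Y₀ + T·(Y₁ − Y₀). Let g₀, g₁ : ℝ → ℝ be versions of the conditional means of Y₀ + T₀·(Y₁ − Y₀) and Y₀ + T₁·(Y₁ − Y₀) given X, respectively, each continuous at 0, and define g(x) := g₁(x) if x ≥ 0 and g(x) := g₀(x) if x < 0. If μ({X = 0}) > 0 and T₁ ≥ T₀ μ-almost surely on {X = 0} (no defiers), then g ∘ X is a version of the conditional mean of Y given X, and lim_{x↓0} g(x) − lim_{x↑0} g(x) = (∫_{{X = 0}} (Y₁ − Y₀)·1{T₁ > T₀} dμ) / μ({X = 0}). -/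

import Mathlib

open MeasureTheory Filter Set Topology

/-!
Below the cutoff the observed treatment is `T₀`, above it `T₁`, so the observed outcome agrees
a.s. with `W₁` on the `X`-measurable set `{X ≥ 0}` and with `W₀` off it (`Wᵢ` the outcome under
`Tᵢ`), and conditioning commutes with such a piecewise choice. Since `{X = 0}` is an atom of
positive mass, integrating the two versions over it gives `(g₁ 0 - g₀ 0) μ{X = 0} =
∫_{X = 0} (T₁ - T₀)(Y₁ - Y₀)`, and without defiers `T₁ - T₀` is the complier indicator.
-/

section

variable {Ω E : Type*} [NormedAddCommGroup E] [NormedSpace ℝ E] [CompleteSpace E]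
  {m m0 : MeasurableSpace Ω} {μ : Measure Ω}

theorem condExp_piecewise {s : Set Ω} [DecidablePred (· ∈ s)] {f g : Ω → E} (hm : m ≤ m0)
    (hs : MeasurableSet[m] s) (hf : Integrable f μ) (hg : Integrable g μ) :
    μ[s.piecewise f g | m] =ᵐ[μ] s.piecewise (μ[f | m]) (μ[g | m]) := by
  have hsplit : ∀ f' g' : Ω → E, s.piecewise f' g' = s.indicator f' + sᶜ.indicator g' := by
    intro f' g'
    ext ω
    by_cases hω : ω ∈ s <;> simp [hω]
  rw [hsplit, hsplit]
  filter_upwards [condExp_add (hf.indicator (hm _ hs)) (hg.indicator (hm _ hs.compl)) m,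
    condExp_indicator hf hs, condExp_indicator hg hs.compl] with ω hsum hf' hg'
  simp only [hsum, Pi.add_apply, hf', hg']

theorem setIntegral_eq_measureReal_smul_of_ae_eq_condExp {s : Set Ω} {f V : Ω → E} {c : E}
    (hm : m ≤ m0) [SigmaFinite (μ.trim hm)] (hs : MeasurableSet[m] s) (hf : Integrable f μ)
    (hV : V =ᵐ[μ] μ[f | m]) (hVc : ∀ ω ∈ s, V ω = c) :
    ∫ ω in s, f ω ∂μ = μ.real s • c := by
  calc ∫ ω in s, f ω ∂μ = ∫ ω in s, (μ[f | m]) ω ∂μ := (setIntegral_condExp hm hf hs).symm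
    _ = ∫ ω in s, V ω ∂μ := integral_congr_ae (ae_restrict_of_ae hV.symm)
    _ = ∫ _ in s, c ∂μ := setIntegral_congr_fun (hm _ hs) hVc
    _ = μ.real s • c := setIntegral_const c

theorem ite_comp_ae_eq_condExp_comap {β : Type*} [MeasurableSpace β] {X : Ω → β}
    (hX : Measurable X) {p : β → Prop} [DecidablePred p] (hp : MeasurableSet {x | p x})
    {W₀ W₁ : Ω → E} (hW₀ : Integrable W₀ μ) (hW₁ : Integrable W₁ μ) {g₀ g₁ : β → E}
    (hg₀ : (fun ω => g₀ (X ω)) =ᵐ[μ] μ[W₀ | MeasurableSpace.comap X inferInstance])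
    (hg₁ : (fun ω => g₁ (X ω)) =ᵐ[μ] μ[W₁ | MeasurableSpace.comap X inferInstance]) :
    (fun ω => if p (X ω) then g₁ (X ω) else g₀ (X ω)) =ᵐ[μ]
      μ[fun ω => if p (X ω) then W₁ ω else W₀ ω | MeasurableSpace.comap X inferInstance] := by
  filter_upwards [condExp_piecewise (s := {ω | p (X ω)}) hX.comap_le ⟨_, hp, rfl⟩ hW₁ hW₀,
    hg₀, hg₁] with ω hpw h₀ h₁
  refine Eq.trans ?_ hpw.symm
  by_cases h : p (X ω)
  · simpa [h] using h₁
  · simpa [h] using h₀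

theorem sub_eq_setIntegral_sub_div_of_ae_eq_condExp [IsFiniteMeasure μ] {s : Set Ω}
    {W₀ W₁ V₀ V₁ : Ω → ℝ} {c₀ c₁ : ℝ} (hm : m ≤ m0) (hs : MeasurableSet[m] s) (hμs : μ s ≠ 0)
    (hW₀ : Integrable W₀ μ) (hW₁ : Integrable W₁ μ)
    (hV₀ : V₀ =ᵐ[μ] μ[W₀ | m]) (hV₁ : V₁ =ᵐ[μ] μ[W₁ | m])
    (hV₀c : ∀ ω ∈ s, V₀ ω = c₀) (hV₁c : ∀ ω ∈ s, V₁ ω = c₁) :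
    c₁ - c₀ = (∫ ω in s, (W₁ ω - W₀ ω) ∂μ) / μ.real s := by
  rw [integral_sub hW₁.integrableOn hW₀.integrableOn,
    setIntegral_eq_measureReal_smul_of_ae_eq_condExp hm hs hW₁ hV₁ hV₁c,
    setIntegral_eq_measureReal_smul_of_ae_eq_condExp hm hs hW₀ hV₀ hV₀c, ← smul_sub,
    smul_eq_mul, mul_div_cancel_left₀ _ ((measureReal_ne_zero_iff (measure_ne_top μ s)).2 hμs)]

theorem MeasureTheory.Integrable.add_mul_sub {Y₀ Y₁ T : Ω → ℝ} {c : ℝ} (hY₀ : Integrable Y₀ μ)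
    (hY₁ : Integrable Y₁ μ) (hT : AEStronglyMeasurable T μ) (hTc : ∀ᵐ ω ∂μ, ‖T ω‖ ≤ c) :
    Integrable (fun ω => Y₀ ω + T ω * (Y₁ ω - Y₀ ω)) μ :=
  hY₀.add ((hY₁.sub hY₀).bdd_mul hT hTc)

end

theorem norm_le_one_of_eq_zero_or_eq_one {t : ℝ} (ht : t = 0 ∨ t = 1) : ‖t‖ ≤ 1 := by
  rcases ht with rfl | rfl <;> simp

theorem sub_eq_ite_lt_of_eq_zero_or_eq_one {t₀ t₁ : ℝ} (h₀ : t₀ = 0 ∨ t₀ = 1)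
    (h₁ : t₁ = 0 ∨ t₁ = 1) (hle : t₀ ≤ t₁) : t₁ - t₀ = if t₀ < t₁ then 1 else 0 := by
  rcases h₀ with rfl | rfl <;> rcases h₁ with rfl | rfl <;>
    (try norm_num at hle) <;> norm_num

theorem add_mul_sub_eq_ite_of_eq_ite {p : Prop} [Decidable p] {z t₀ t₁ y₀ y₁ : ℝ}
    (hz : (if p then 1 else 0) = z) :
    y₀ + (z * t₁ + (1 - z) * t₀) * (y₁ - y₀) =
      if p then y₀ + t₁ * (y₁ - y₀) else y₀ + t₀ * (y₁ - y₀) := by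
  subst hz
  split_ifs <;> ring

theorem stmt4_general {Ω : Type*} [MeasurableSpace Ω] (μ : Measure Ω) [IsProbabilityMeasure μ]
    (X Y₀ Y₁ T₀ T₁ Z : Ω → ℝ) (hX : Measurable X)
    (hY₀i : Integrable Y₀ μ) (hY₁i : Integrable Y₁ μ)
    (hT₀m : Measurable T₀) (hT₁m : Measurable T₁)
    (hT₀01 : ∀ ω, T₀ ω = 0 ∨ T₀ ω = 1) (hT₁01 : ∀ ω, T₁ ω = 0 ∨ T₁ ω = 1)
    (hZ : (fun ω => if 0 ≤ X ω then (1 : ℝ) else 0) =ᵐ[μ] Z)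
    (T : Ω → ℝ) (hT : T = fun ω => Z ω * T₁ ω + (1 - Z ω) * T₀ ω)
    (Y : Ω → ℝ) (hY : Y = fun ω => Y₀ ω + T ω * (Y₁ ω - Y₀ ω))
    (g₀ g₁ : ℝ → ℝ)
    (hg₀ : (fun ω => g₀ (X ω)) =ᵐ[μ]
      μ[(fun ω => Y₀ ω + T₀ ω * (Y₁ ω - Y₀ ω)) | MeasurableSpace.comap X (borel ℝ)])
    (hg₁ : (fun ω => g₁ (X ω)) =ᵐ[μ]
      μ[(fun ω => Y₀ ω + T₁ ω * (Y₁ ω - Y₀ ω)) | MeasurableSpace.comap X (borel ℝ)])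
    (hc₀ : ContinuousAt g₀ 0) (hc₁ : ContinuousAt g₁ 0)
    (g : ℝ → ℝ) (hg : g = fun x => if 0 ≤ x then g₁ x else g₀ x)
    (hatom : 0 < μ {ω | X ω = 0})
    (hmono : ∀ᵐ ω ∂μ, X ω = 0 → T₀ ω ≤ T₁ ω) :
    ((fun ω => g (X ω)) =ᵐ[μ] μ[Y | MeasurableSpace.comap X (borel ℝ)]) ∧
      Tendsto g (𝓝[>] (0 : ℝ)) (𝓝 (g₁ 0)) ∧
      Tendsto g (𝓝[<] (0 : ℝ)) (𝓝 (g₀ 0)) ∧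
      g₁ 0 - g₀ 0 =
        (∫ ω in {ω | X ω = 0}, (Y₁ ω - Y₀ ω) * (if T₀ ω < T₁ ω then (1 : ℝ) else 0) ∂μ) /
          (μ {ω | X ω = 0}).toReal := by
  rw [← BorelSpace.measurable_eq] at hg₀ hg₁ ⊢
  set W₀ : Ω → ℝ := fun ω => Y₀ ω + T₀ ω * (Y₁ ω - Y₀ ω)
  set W₁ : Ω → ℝ := fun ω => Y₀ ω + T₁ ω * (Y₁ ω - Y₀ ω)
  have hW₀ : Integrable W₀ μ := hY₀i.add_mul_sub hY₁i hT₀m.aestronglyMeasurable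
    (ae_of_all _ fun ω => norm_le_one_of_eq_zero_or_eq_one (hT₀01 ω))
  have hW₁ : Integrable W₁ μ := hY₀i.add_mul_sub hY₁i hT₁m.aestronglyMeasurable
    (ae_of_all _ fun ω => norm_le_one_of_eq_zero_or_eq_one (hT₁01 ω))
  refine ⟨?_, ?_, ?_, ?_⟩
  · have hYW : Y =ᵐ[μ] fun ω => if 0 ≤ X ω then W₁ ω else W₀ ω :=
      hZ.mono fun ω hω => by subst hY hT; exact add_mul_sub_eq_ite_of_eq_ite hω
    exact hg ▸ (ite_comp_ae_eq_condExp_comap hX measurableSet_Ici hW₀ hW₁ hg₀ hg₁).trans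
      (condExp_congr_ae hYW.symm)
  · exact hg ▸ tendsto_nhdsWithin_congr (fun x hx => (if_pos (le_of_lt hx)).symm)
      hc₁.continuousWithinAt
  · exact hg ▸ tendsto_nhdsWithin_congr (fun x hx => (if_neg (not_le.2 hx)).symm)
      hc₀.continuousWithinAt
  · have hcompliers : ∫ ω in {ω | X ω = 0}, (W₁ ω - W₀ ω) ∂μ =
        ∫ ω in {ω | X ω = 0}, (Y₁ ω - Y₀ ω) * (if T₀ ω < T₁ ω then 1 else 0) ∂μ := by
      refine setIntegral_congr_ae (hX (measurableSet_singleton 0)) (hmono.mono fun ω hle hω => ?_)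
      rw [← sub_eq_ite_lt_of_eq_zero_or_eq_one (hT₀01 ω) (hT₁01 ω) (hle hω)]
      ring
    rw [← hcompliers, ← measureReal_def]
    exact sub_eq_setIntegral_sub_div_of_ae_eq_condExp hX.comap_le
      ⟨{0}, measurableSet_singleton 0, rfl⟩ hatom.ne' hW₀ hW₁ hg₀ hg₁
      (fun ω hω => by rw [show X ω = 0 from hω]) (fun ω hω => by rw [show X ω = 0 from hω])

/-- Fuzzy RD, reduced form: with treatment assignment `Z = 1{X ≥ 0}` a.s., observed treatment
`T = Z T₁ + (1 - Z) T₀` and observed outcome `Y = Y₀ + T (Y₁ - Y₀)`, if `g₀, g₁` are versions of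
the conditional means of `Y₀ + T₀ (Y₁ - Y₀)` and `Y₀ + T₁ (Y₁ - Y₀)` given `X`, continuous at
`0`, there are no defiers on `{X = 0}` and `μ{X = 0} > 0`, then `g ∘ X` is a version of the
conditional mean of `Y` given `X` and the jump of `g` at the cutoff equals
`E[(Y₁ - Y₀) 1{T₁ > T₀} | X = 0]`. -/
theorem stmt4 {Ω : Type*} [MeasurableSpace Ω] (μ : Measure Ω) [IsProbabilityMeasure μ]
    (X Y₀ Y₁ T₀ T₁ Z : Ω → ℝ) (hX : Measurable X)
    (hY₀m : Measurable Y₀) (hY₁m : Measurable Y₁)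
    (hY₀i : Integrable Y₀ μ) (hY₁i : Integrable Y₁ μ)
    (hT₀m : Measurable T₀) (hT₁m : Measurable T₁) (hZm : Measurable Z)
    (hT₀01 : ∀ ω, T₀ ω = 0 ∨ T₀ ω = 1) (hT₁01 : ∀ ω, T₁ ω = 0 ∨ T₁ ω = 1)
    (hZ : (fun ω => if 0 ≤ X ω then (1 : ℝ) else 0) =ᵐ[μ] Z)
    (T : Ω → ℝ) (hT : T = fun ω => Z ω * T₁ ω + (1 - Z ω) * T₀ ω)
    (Y : Ω → ℝ) (hY : Y = fun ω => Y₀ ω + T ω * (Y₁ ω - Y₀ ω))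
    (g₀ g₁ : ℝ → ℝ) (hg₀m : Measurable g₀) (hg₁m : Measurable g₁)
    (hg₀ : (fun ω => g₀ (X ω)) =ᵐ[μ]
      μ[(fun ω => Y₀ ω + T₀ ω * (Y₁ ω - Y₀ ω)) | MeasurableSpace.comap X (borel ℝ)])
    (hg₁ : (fun ω => g₁ (X ω)) =ᵐ[μ]
      μ[(fun ω => Y₀ ω + T₁ ω * (Y₁ ω - Y₀ ω)) | MeasurableSpace.comap X (borel ℝ)])
    (hc₀ : ContinuousAt g₀ 0) (hc₁ : ContinuousAt g₁ 0)
    (g : ℝ → ℝ) (hg : g = fun x => if 0 ≤ x then g₁ x else g₀ x)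
    (hatom : 0 < μ {ω | X ω = 0})
    (hmono : ∀ᵐ ω ∂μ, X ω = 0 → T₀ ω ≤ T₁ ω) :
    ((fun ω => g (X ω)) =ᵐ[μ] μ[Y | MeasurableSpace.comap X (borel ℝ)]) ∧
      Tendsto g (𝓝[>] (0 : ℝ)) (𝓝 (g₁ 0)) ∧
      Tendsto g (𝓝[<] (0 : ℝ)) (𝓝 (g₀ 0)) ∧
      g₁ 0 - g₀ 0 =
        (∫ ω in {ω | X ω = 0}, (Y₁ ω - Y₀ ω) * (if T₀ ω < T₁ ω then (1 : ℝ) else 0) ∂μ) /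
          (μ {ω | X ω = 0}).toReal :=
  stmt4_general μ X Y₀ Y₁ T₀ T₁ Z hX hY₀i hY₁i hT₀m hT₁m hT₀01 hT₁01 hZ T hT Y hY g₀ g₁ hg₀ hg₁ hc₀
    hc₁ g hg hatom hmono
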